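/- Let ψ be an endomorphism of an abelian group E with ψ∘ψ = [-3], and let P ∈ E be a point of finite depth d, i.e. d is the minimal natural number with ψ⁽ᵈ⁾(P) periodic. Then ord(P) = 3^⌈d/2⌉ · N, where N = ord(ψ⁽ᵈ⁾(P)) and gcd(N,3) = 1. -/
import Mathlib

private lemma iter_two_mul {E : Type*} [AddCommGroup E] (ψ : E →+ E)
    (hψ : ∀ P : E, ψ (ψ P) = -((3 : ℤ) • P)) (k : ℕ) (x : E) :
    (⇑ψ)^[2*k] x = ((-3:ℤ)^k) • x := by
  induction k with
  | zero => simp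
  | succ k ih =>
    rw [show 2*(k+1) = (2*k) + 1 + 1 by ring, Function.iterate_succ_apply',
      Function.iterate_succ_apply', ih, hψ, ← neg_smul, smul_smul]
    congr 1; ring

private lemma iter_map_nsmul {E : Type*} [AddCommGroup E] (ψ : E →+ E) (n a : ℕ) (x : E) :
    (⇑ψ)^[n] (a • x) = a • (⇑ψ)^[n] x := by
  induction n with
  | zero => simp
  | succ n ih => rw [Function.iterate_succ_apply', Function.iterate_succ_apply', ih, map_nsmul]

private lemma periodic_of_coprime {E : Type*} [AddCommGroup E] (ψ : E →+ E)
    (hψ : ∀ P : E, ψ (ψ P) = -((3 : ℤ) • P)) (x : E) (M : ℕ)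
    (hM : M ≠ 0) (h3 : ¬ 3 ∣ M) (hx : (M:ℤ) • x = 0) :
    ∃ m > 0, (⇑ψ)^[m] x = x := by
  haveI : NeZero M := ⟨hM⟩
  have hu3 : IsUnit ((3:ℕ) : ZMod M) := ZMod.isUnit_prime_of_not_dvd Nat.prime_three h3
  have hu : IsUnit (-3 : ZMod M) := by
    have : ((3:ℕ) : ZMod M) = (3 : ZMod M) := by push_cast; ring
    rw [this] at hu3
    exact hu3.neg
  obtain ⟨u, hu⟩ := hu
  set k := orderOf u with hk
  have hkpos : 0 < k := orderOf_pos u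
  have huk : ((-3 : ZMod M))^k = 1 := by
    rw [← hu, ← Units.val_pow_eq_pow_val, pow_orderOf_eq_one, Units.val_one]
  have hdvd : (M:ℤ) ∣ ((-3:ℤ)^k - 1) := by
    have : ((((-3:ℤ)^k - 1) : ℤ) : ZMod M) = 0 := by push_cast [huk]; ring
    exact (ZMod.intCast_zmod_eq_zero_iff_dvd _ _).mp this
  obtain ⟨t, ht⟩ := hdvd
  refine ⟨2*k, by omega, ?_⟩
  rw [iter_two_mul ψ hψ k x]
  have : (-3:ℤ)^k = 1 + (M:ℤ) * t := by linarith [ht]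
  rw [this, add_smul, one_smul, mul_comm, mul_smul, hx, smul_zero, add_zero]

/-- let `ψ` be an endomorphism of an abelian group `E` with `ψ∘ψ = [-3]`, and
let `P` have finite depth `d` (minimal `d` with `ψ⁽ᵈ⁾(P)` periodic). Then
`ord(P) = 3^⌈d/2⌉ · N` where `N = ord(ψ⁽ᵈ⁾(P))` and `gcd(N,3) = 1`. -/
theorem order_eq_depth_pow {E : Type*} [AddCommGroup E] (ψ : E →+ E)
    (hψ : ∀ P : E, ψ (ψ P) = -((3 : ℤ) • P)) (P : E) (d : ℕ)
    (hper : ∃ m > 0, (⇑ψ)^[m] ((⇑ψ)^[d] P) = (⇑ψ)^[d] P)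
    (hmin : ∀ e < d, ¬ ∃ m > 0, (⇑ψ)^[m] ((⇑ψ)^[e] P) = (⇑ψ)^[e] P) :
    addOrderOf P = 3 ^ ((d + 1) / 2) * addOrderOf ((⇑ψ)^[d] P) ∧
    Nat.gcd (addOrderOf ((⇑ψ)^[d] P)) 3 = 1 := by
  set Q := (⇑ψ)^[d] P with hQdef
  set N := addOrderOf Q with hNdef
  obtain ⟨m, hm, hmQ⟩ := hper
  -- Step 1: N is positive and coprime to 3
  have h2m : (⇑ψ)^[2*m] Q = Q := by
    rw [two_mul, Function.iterate_add_apply, hmQ, hmQ]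
  set c : ℤ := (-3)^m - 1 with hc
  have hcQ : c • Q = 0 := by
    have h := iter_two_mul ψ hψ m Q
    rw [h2m] at h
    rw [hc, sub_smul, one_smul, ← h, sub_self]
  have hcne : c ≠ 0 := by
    have : (3:ℤ) ∣ (-3:ℤ)^m := dvd_pow (by norm_num) (by omega)
    intro h
    rw [hc, sub_eq_zero] at h
    rw [h] at this
    norm_num at this
  have hc3 : ¬ (3:ℤ) ∣ c := by
    have h1 : (3:ℤ) ∣ (-3:ℤ)^m := dvd_pow (by norm_num) (by omega)
    intro h
    have h2 : (3:ℤ) ∣ 1 := by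
      have := dvd_sub h1 h
      rw [hc] at this
      simpa using this
    norm_num at h2
  have hnaQ : (c.natAbs : ℕ) • Q = 0 := by
    rcases Int.natAbs_eq c with h | h
    · rw [← natCast_zsmul, ← h, hcQ]
    · rw [← natCast_zsmul, ← neg_neg ((c.natAbs : ℤ)), ← h, neg_smul, hcQ, neg_zero]
  have hNdvd : N ∣ c.natAbs := addOrderOf_dvd_of_nsmul_eq_zero hnaQ
  have hN3 : ¬ 3 ∣ N := by
    intro h
    exact hc3 (Int.dvd_natAbs.mp (Int.natCast_dvd_natCast.mpr (h.trans hNdvd)))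
  have hNne : N ≠ 0 := by
    intro h
    rw [h] at hNdvd
    exact hcne (Int.natAbs_eq_zero.mp (Nat.eq_zero_of_zero_dvd hNdvd))
  have hgcd : Nat.Coprime N 3 :=
    Nat.coprime_comm.mp ((Nat.Prime.coprime_iff_not_dvd Nat.prime_three).mpr hN3)
  refine ⟨?_, hgcd⟩
  set cc := (d+1)/2 with hcc
  -- upper bound: (3^cc * N) • P = 0
  have hupper : (3^cc * N : ℕ) • P = 0 := by
    rw [← natCast_zsmul]
    rcases Nat.even_or_odd d with hd | hd
    · obtain ⟨k, hk⟩ := hd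
      have hcck : cc = k := by omega
      have hQeq : Q = ((-3:ℤ)^k) • P := by
        rw [hQdef, show d = 2*k by omega, iter_two_mul ψ hψ]
      have hNQ : ((N:ℤ) * (-3)^k) • P = 0 := by
        rw [mul_smul, ← hQeq, natCast_zsmul, addOrderOf_nsmul_eq_zero]
      have heq : ((3^cc * N : ℕ) : ℤ) = (-1)^k * ((N:ℤ) * (-3)^k) := by
        push_cast [hcck]
        rw [show ((-3:ℤ))^k = (-1)^k * 3^k by rw [← mul_pow]; norm_num]
        ring_nf
        rw [pow_mul']
        norm_num
      rw [heq, mul_smul, hNQ, smul_zero]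
    · obtain ⟨k, hk⟩ := hd
      have hcck : cc = k + 1 := by omega
      have hQeq : Q = ψ (((-3:ℤ)^k) • P) := by
        rw [hQdef, show d = 2*k+1 by omega, Function.iterate_succ_apply', iter_two_mul ψ hψ]
      have hNQ : ψ ((N:ℤ) • ((-3:ℤ)^k • P)) = 0 := by
        rw [map_zsmul, ← hQeq, natCast_zsmul, addOrderOf_nsmul_eq_zero]
      have h3Q : (3:ℤ) • ((N:ℤ) • ((-3:ℤ)^k • P)) = 0 := by
        have h := hψ ((N:ℤ) • ((-3:ℤ)^k • P))
        rw [hNQ, map_zero] at h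
        exact neg_eq_zero.mp h.symm
      rw [smul_smul, smul_smul] at h3Q
      have heq : ((3^cc * N : ℕ) : ℤ) = (-1)^k * ((3:ℤ) * N * (-3)^k) := by
        push_cast [hcck]
        rw [show ((-3:ℤ))^k = (-1)^k * 3^k by rw [← mul_pow]; norm_num]
        ring_nf
        rw [pow_mul']
        norm_num
      rw [heq, mul_smul, h3Q, smul_zero]
  have hone : addOrderOf P ∣ 3^cc * N := addOrderOf_dvd_of_nsmul_eq_zero hupper
  set o := addOrderOf P with ho
  have hone0 : o ≠ 0 := by
    intro h
    rw [h] at hone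
    have h0 := Nat.eq_zero_of_zero_dvd hone
    rcases Nat.mul_eq_zero.mp h0 with h' | h'
    · exact (by positivity : (0:ℕ) < 3^cc).ne' h'
    · exact hNne h'
  have hNo : N ∣ o := by
    apply addOrderOf_dvd_of_nsmul_eq_zero
    rw [hQdef, ← iter_map_nsmul ψ d o P, ho, addOrderOf_nsmul_eq_zero]
    exact Function.iterate_fixed (map_zero ψ) d
  set j := o.factorization 3 with hj
  set M := ordCompl[3] o with hM
  have hoM : 3^j * M = o := Nat.ordProj_mul_ordCompl_eq_self o 3
  have hM3 : ¬ 3 ∣ M := Nat.not_dvd_ordCompl Nat.prime_three hone0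
  have hccj : cc ≤ j := by
    by_contra hlt
    push_neg at hlt
    have h2j : 2*j < d := by omega
    apply hmin (2*j) h2j
    apply periodic_of_coprime ψ hψ _ M ?_ hM3 ?_
    · intro h
      rw [h, mul_zero] at hoM
      exact hone0 hoM.symm
    · rw [iter_two_mul ψ hψ j P, smul_smul]
      have heq : (M:ℤ) * (-3)^j = (-1)^j * ((3^j * M : ℕ) : ℤ) := by
        push_cast
        rw [show ((-3:ℤ))^j = (-1)^j * 3^j by rw [← mul_pow]; norm_num]
        ring_nf
      rw [heq, mul_smul, natCast_zsmul, hoM, addOrderOf_nsmul_eq_zero, smul_zero]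
  have h3cco : (3:ℕ)^cc ∣ o := dvd_trans (pow_dvd_pow 3 hccj) ⟨M, hoM.symm⟩
  have hcop : Nat.Coprime (3^cc) N := (Nat.Coprime.pow_left cc hgcd.symm)
  exact Nat.dvd_antisymm hone (hcop.mul_dvd_of_dvd_of_dvd h3cco hNo)
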